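/- Let 1 ≤ p < ∞ and let w be a weight on ℝⁿ. Suppose there is C > 0 such that for every cube Q and every measurable E ⊂ Q, |E|/|Q| ≤ C(w(E)/w(Q))^{1/p}. Then for every φ : ℝⁿ × (0,∞) → (0,∞) that is almost decreasing in r and satisfies φ(x,r) ≍ φ(y,r) for |x−y| ≤ r, and every f ∈ L¹_loc(ℝⁿ): sup_Q φ(Q)‖(f−f_Q)χ_Q‖_{L^{p,1}(w)}/‖χ_Q‖_{L^{p,1}(w)} ≥ c‖f‖_{L_{1,φ}} for some c > 0 independent of f. -/

import Mathlib

/-! On a cube `Q`, apply the `A(p,1)` condition to the level sets `E_t = {|f - f_Q| > t} ⊆ Q`: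
`|E_t| ≤ C |Q| (w(E_t) / w(Q))^{1/p}`. Integrating in `t` (layer cake) gives
`∫_Q |f - f_Q| ≤ C |Q| w(Q)^{-1/p} ∫₀^∞ w(E_t)^{1/p} dt`. By Tonelli the last integral is at most
`‖(f - f_Q)χ_Q‖_{L^{p,1}(w)} / p`, while `‖χ_Q‖_{L^{p,1}(w)} = p w(Q)^{1/p}`. Hence the Campanato
average over each cube is at most `C` times the Lorentz ratio, and one may take `c = C⁻¹`. -/

open MeasureTheory ENNReal NNReal Set

noncomputable section

/-- Euclidean space `ℝⁿ`. -/
abbrev En (n : ℕ) : Type := EuclideanSpace ℝ (Fin n)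

/-- The axis-parallel half-open cube `Q(x,r) = x + [-r, r)ⁿ`. -/
def Cube {n : ℕ} (x : En n) (r : ℝ) : Set (En n) :=
  {y | ∀ i, x i - r ≤ y i ∧ y i < x i + r}

/-- The uncentered Hardy–Littlewood maximal operator over axis-parallel cubes. -/
def maximal {n : ℕ} (f : En n → ℝ≥0∞) (x : En n) : ℝ≥0∞ :=
  ⨆ (c : En n) (r : ℝ) (_ : 0 < r) (_ : x ∈ Cube c r),
    (∫⁻ y in Cube c r, f y) / volume (Cube c r)

/-- The associate (Köthe dual) functional `‖g‖_{X'} = sup_{‖h‖_X ≤ 1} ∫ |g h|`. -/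
def associate {n : ℕ} (N : (En n → ℝ≥0∞) → ℝ≥0∞) (g : En n → ℝ≥0∞) : ℝ≥0∞ :=
  ⨆ (h : En n → ℝ≥0∞) (_ : N h ≤ 1), ∫⁻ x, g x * h x

/-- A quasi-Banach function quasi-norm with the ideal (lattice) property. -/
structure IsQuasiBanachFN {n : ℕ} (N : (En n → ℝ≥0∞) → ℝ≥0∞) : Prop where
  smul : ∀ (c : ℝ≥0) (f : En n → ℝ≥0∞), N (fun x => (c : ℝ≥0∞) * f x) = (c : ℝ≥0∞) * N f
  quasi_triangle : ∃ K : ℝ≥0∞, 1 ≤ K ∧ K ≠ ∞ ∧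
    ∀ f g : En n → ℝ≥0∞, N (f + g) ≤ K * (N f + N g)
  ideal : ∀ f g : En n → ℝ≥0∞, (∀ᵐ x ∂volume, g x ≤ f x) → N g ≤ N f

/-- A quasi-rBfs: a quasi-Banach function quasi-norm with the ideal property such that
indicators of cubes have finite quasi-norm. -/
structure IsQuasiRBFS {n : ℕ} (N : (En n → ℝ≥0∞) → ℝ≥0∞) extends IsQuasiBanachFN N : Prop where
  cube_lt_top : ∀ (c : En n) (r : ℝ), 0 < r → N ((Cube c r).indicator 1) < ∞

/-- A Banach function norm: ideal property, homogeneity and the triangle inequality. -/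
structure IsBanachFN {n : ℕ} (N : (En n → ℝ≥0∞) → ℝ≥0∞) : Prop where
  smul : ∀ (c : ℝ≥0) (f : En n → ℝ≥0∞), N (fun x => (c : ℝ≥0∞) * f x) = (c : ℝ≥0∞) * N f
  add_le : ∀ f g : En n → ℝ≥0∞, N (f + g) ≤ N f + N g
  ideal : ∀ f g : En n → ℝ≥0∞, (∀ᵐ x ∂volume, g x ≤ f x) → N g ≤ N f

/-- `φ` is almost decreasing in its second variable. -/
def AlmostDecr {n : ℕ} (φ : En n → ℝ → ℝ) : Prop :=
  ∃ C > (0 : ℝ), ∀ (x : En n) (r s : ℝ), 0 < s → s ≤ r → φ x r ≤ C * φ x s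

/-- `φ(x,r) ≍ φ(y,r)` whenever `|x - y| ≤ r`. -/
def NearComparable {n : ℕ} (φ : En n → ℝ → ℝ) : Prop :=
  ∃ C ≥ (1 : ℝ), ∀ (x y : En n) (r : ℝ), 0 < r → ‖x - y‖ ≤ r →
    C⁻¹ * φ y r ≤ φ x r ∧ φ x r ≤ C * φ y r

/-- `φ` is positive. -/
def PhiPos {n : ℕ} (φ : En n → ℝ → ℝ) : Prop :=
  ∀ (x : En n) (r : ℝ), 0 < r → 0 < φ x r

/-- The average `f_Q` of `f` over the cube `Q(c,r)`. -/
def cubeAvg {n : ℕ} (c : En n) (r : ℝ) (f : En n → ℝ) : ℝ :=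
  ⨍ z in Cube c r, f z

/-- The pointwise oscillation `|f - f_Q|` (as an `ℝ≥0∞`-valued function). -/
def osc {n : ℕ} (c : En n) (r : ℝ) (f : En n → ℝ) : En n → ℝ≥0∞ :=
  fun y => (‖f y - cubeAvg c r f‖₊ : ℝ≥0∞)

/-- The Campanato norm `‖f‖_{L_{1,φ}} = sup_Q φ(Q) |Q|⁻¹ ∫_Q |f - f_Q|`. -/
def campanato {n : ℕ} (φ : En n → ℝ → ℝ) (f : En n → ℝ) : ℝ≥0∞ :=
  ⨆ (c : En n) (r : ℝ) (_ : 0 < r),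
    ENNReal.ofReal (φ c r) * ((∫⁻ y in Cube c r, osc c r f y) / volume (Cube c r))

/-- The quantity `sup_Q φ(Q) ‖(f - f_Q)χ_Q‖_X / ‖χ_Q‖_X`. -/
def ratioNorm {n : ℕ} (N : (En n → ℝ≥0∞) → ℝ≥0∞) (φ : En n → ℝ → ℝ) (f : En n → ℝ) : ℝ≥0∞ :=
  ⨆ (c : En n) (r : ℝ) (_ : 0 < r),
    ENNReal.ofReal (φ c r) *
      (N ((Cube c r).indicator (osc c r f)) / N ((Cube c r).indicator 1))

/-- The vector-valued maximal bound `‖Σ (M f_j)^η‖_X ≤ C ‖Σ |f_j|^η‖_X`. -/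
def VectorMaximal {n : ℕ} (N : (En n → ℝ≥0∞) → ℝ≥0∞) (η : ℝ) (C : ℝ≥0∞) : Prop :=
  ∀ f : ℕ → En n → ℝ≥0∞, (∀ j, Measurable (f j)) →
    N (fun x => ∑' j, maximal (f j) x ^ η) ≤ C * N (fun x => ∑' j, f j x ^ η)

/-- The weighted distribution function `w({|f| > α})`. -/
def wDist {n : ℕ} (w : En n → ℝ≥0∞) (f : En n → ℝ) (α : ℝ) : ℝ≥0∞ :=
  ∫⁻ x in {x | α < |f x|}, w x

/-- The weighted decreasing rearrangement `f*_w(t) = inf {α > 0 : w(|f| > α) ≤ t}`. -/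
def wRearr {n : ℕ} (w : En n → ℝ≥0∞) (f : En n → ℝ) (t : ℝ≥0∞) : ℝ≥0∞ :=
  ⨅ (α : ℝ) (_ : 0 < α) (_ : wDist w f α ≤ t), ENNReal.ofReal α

/-- The weighted Lorentz `L^{p,1}(w)` norm `∫₀^∞ t^{1/p} f*_w(t) dt/t`. -/
def wLorentz1 {n : ℕ} (p : ℝ) (w : En n → ℝ≥0∞) (f : En n → ℝ) : ℝ≥0∞ :=
  ∫⁻ t in Ioi (0 : ℝ), ENNReal.ofReal (t ^ (1 / p - 1)) * wRearr w f (ENNReal.ofReal t)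

lemma cube_eq_preimage_pi {n : ℕ} (c : En n) (r : ℝ) :
    Cube c r = (MeasurableEquiv.toLp 2 (Fin n → ℝ)).symm ⁻¹'
      univ.pi fun i => Ico (c i - r) (c i + r) := by
  ext y
  simp [Cube, MeasurableEquiv.coe_toLp_symm, Set.mem_pi]

lemma measurableSet_cube {n : ℕ} (c : En n) (r : ℝ) : MeasurableSet (Cube c r) := by
  rw [cube_eq_preimage_pi]
  exact (MeasurableEquiv.toLp 2 (Fin n → ℝ)).symm.measurable
    (MeasurableSet.univ_pi fun _ => measurableSet_Ico)

lemma volume_cube {n : ℕ} (c : En n) (r : ℝ) :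
    volume (Cube c r) = ENNReal.ofReal (2 * r) ^ n := by
  rw [cube_eq_preimage_pi,
    (EuclideanSpace.volume_preserving_symm_measurableEquiv_toLp (Fin n)).measure_preimage
      (MeasurableSet.univ_pi fun _ => measurableSet_Ico).nullMeasurableSet,
    volume_pi_pi]
  simp [Real.volume_Ico, two_mul]

lemma volume_cube_ne_zero {n : ℕ} (c : En n) {r : ℝ} (hr : 0 < r) : volume (Cube c r) ≠ 0 := by
  rw [volume_cube]
  exact pow_ne_zero n (ENNReal.ofReal_pos.mpr (by linarith)).ne'

lemma volume_cube_ne_top {n : ℕ} (c : En n) (r : ℝ) : volume (Cube c r) ≠ ∞ := by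
  rw [volume_cube]
  exact ENNReal.pow_ne_top ENNReal.ofReal_ne_top

section Rearrangement

variable {n : ℕ} (w : En n → ℝ≥0∞)

lemma wDist_antitone (f : En n → ℝ) : Antitone (wDist w f) :=
  fun _ _ hab => lintegral_mono_set fun _ hx => hab.trans_lt hx

lemma wDist_congr_ae {f g : En n → ℝ} (h : f =ᵐ[volume] g) : wDist w f = wDist w g := by
  funext α
  refine setLIntegral_congr ?_
  filter_upwards [h] with x hx
  change (α < |f x|) = (α < |g x|)
  rw [hx]

lemma wLorentz1_congr_ae (p : ℝ) {f g : En n → ℝ} (h : f =ᵐ[volume] g) :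
    wLorentz1 p w f = wLorentz1 p w g := by
  simp only [wLorentz1, wRearr, wDist_congr_ae w h]

lemma wRearr_le_ofReal {f : En n → ℝ} {t : ℝ≥0∞} {β : ℝ} (hβ : 0 < β) (h : wDist w f β ≤ t) :
    wRearr w f t ≤ ENNReal.ofReal β :=
  iInf₂_le_of_le β hβ (iInf_le _ h)

lemma ofReal_le_wRearr {f : En n → ℝ} {t : ℝ≥0∞} {α : ℝ} (h : t < wDist w f α) :
    ENNReal.ofReal α ≤ wRearr w f t := by
  refine le_iInf₂ fun β _ => le_iInf fun hβt => ENNReal.ofReal_le_ofReal ?_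
  by_contra! hβα
  exact (wDist_antitone w f hβα.le).trans hβt |>.not_gt h

lemma volume_lt_wDist_le_wRearr (f : En n → ℝ) (t : ℝ≥0∞) :
    volume ({α : ℝ | t < wDist w f α} ∩ Ioi 0) ≤ wRearr w f t := by
  rcases eq_or_ne (wRearr w f t) ∞ with hR | hR
  · simp [hR]
  calc volume ({α : ℝ | t < wDist w f α} ∩ Ioi 0)
      ≤ volume (Ioc 0 (wRearr w f t).toReal) := by
        refine measure_mono fun α ⟨hα, hα0⟩ => ⟨hα0, ?_⟩
        exact (ENNReal.ofReal_le_iff_le_toReal hR).mp (ofReal_le_wRearr w hα)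
    _ = wRearr w f t := by simp [Real.volume_Ioc, hR]

variable (Q : Set (En n))

lemma wDist_indicator_one_of_lt_one {β : ℝ} (hβ0 : 0 < β) (hβ1 : β < 1) :
    wDist w (Q.indicator 1) β = ∫⁻ x in Q, w x := by
  have : {x | β < |Q.indicator (1 : En n → ℝ) x|} = Q := by
    ext x
    by_cases hx : x ∈ Q <;> simp [hx, hβ1, hβ0.le]
  rw [wDist, this]

lemma wDist_indicator_one_of_one_le {β : ℝ} (hβ : 1 ≤ β) : wDist w (Q.indicator 1) β = 0 := by
  have : {x | β < |Q.indicator (1 : En n → ℝ) x|} = ∅ := by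
    ext x
    by_cases hx : x ∈ Q <;> simp [hx, hβ, (zero_le_one.trans hβ)]
  simp [wDist, this]

lemma wRearr_indicator_one (t : ℝ≥0∞) :
    wRearr w (Q.indicator 1) t = if t < ∫⁻ x in Q, w x then 1 else 0 := by
  split_ifs with ht
  · refine le_antisymm ?_ ?_
    · simpa using wRearr_le_ofReal w one_pos (by simp [wDist_indicator_one_of_one_le w Q le_rfl])
    · refine le_iInf₂ fun β hβ => le_iInf fun hβt => ?_
      have h1β : 1 ≤ β := by
        by_contra! hβ1
        rw [wDist_indicator_one_of_lt_one w Q hβ hβ1] at hβt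
        exact hβt.not_gt ht
      simpa using ENNReal.ofReal_le_ofReal h1β
  · refine le_antisymm (ENNReal.le_of_forall_pos_le_add fun ε hε _ => ?_) zero_le
    have hε' : (0 : ℝ) < min (ε : ℝ) 2⁻¹ := lt_min (by exact_mod_cast hε) (by norm_num)
    calc wRearr w (Q.indicator 1) t ≤ ENNReal.ofReal (min (ε : ℝ) 2⁻¹) := by
          refine wRearr_le_ofReal w hε' ?_
          rw [wDist_indicator_one_of_lt_one w Q hε' ((min_le_right _ _).trans_lt (by norm_num))]
          exact not_lt.mp ht
      _ ≤ 0 + ε := by simp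

end Rearrangement

lemma lintegral_Ioo_rpow_one_div_sub_one {p : ℝ} (hp : 0 < p) {s : ℝ} (hs : 0 ≤ s) :
    ∫⁻ t in Ioo (0 : ℝ) s, ENNReal.ofReal (t ^ (1 / p - 1)) = ENNReal.ofReal (p * s ^ (1 / p)) := by
  have hexp : (-1 : ℝ) < 1 / p - 1 := by linarith [one_div_pos.mpr hp]
  have hint : IntegrableOn (fun t : ℝ => t ^ (1 / p - 1)) (Ioc 0 s) :=
    (intervalIntegrable_iff_integrableOn_Ioc_of_le hs).mp
      (intervalIntegral.intervalIntegrable_rpow' hexp)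
  rw [restrict_Ioo_eq_restrict_Ioc, ← ofReal_integral_eq_lintegral_ofReal hint
    (ae_restrict_of_forall_mem measurableSet_Ioc fun t ht => Real.rpow_nonneg ht.1.le _),
    ← intervalIntegral.integral_of_le hs, integral_rpow (Or.inl hexp), sub_add_cancel,
    Real.zero_rpow (by positivity), sub_zero, div_div_eq_mul_div, div_one, mul_comm]

lemma lintegral_Ioi_indicator_ofReal_lt_rpow {p : ℝ} (hp : 0 < p) {S : ℝ≥0∞} (hS : S ≠ ∞) :
    ∫⁻ t in Ioi (0 : ℝ),
      {u : ℝ | ENNReal.ofReal u < S}.indicator (fun u => ENNReal.ofReal (u ^ (1 / p - 1))) t =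
    ENNReal.ofReal p * S ^ (1 / p) := by
  have hmeas : MeasurableSet {u : ℝ | ENNReal.ofReal u < S} :=
    measurableSet_lt ENNReal.measurable_ofReal measurable_const
  have hset : {u : ℝ | ENNReal.ofReal u < S} ∩ Ioi 0 = Ioo 0 S.toReal := by
    ext t
    simp only [mem_inter_iff, mem_ofPred_eq, mem_Ioi, mem_Ioo]
    exact ⟨fun ⟨h, ht⟩ => ⟨ht, (ENNReal.ofReal_lt_iff_lt_toReal ht.le hS).mp h⟩,
      fun ⟨ht, h⟩ => ⟨(ENNReal.ofReal_lt_iff_lt_toReal ht.le hS).mpr h, ht⟩⟩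
  rw [lintegral_indicator hmeas, Measure.restrict_restrict hmeas, hset,
    lintegral_Ioo_rpow_one_div_sub_one hp ENNReal.toReal_nonneg, ENNReal.ofReal_mul hp.le,
    ← ENNReal.ofReal_rpow_of_nonneg ENNReal.toReal_nonneg (by positivity), ENNReal.ofReal_toReal hS]

lemma wLorentz1_indicator_one {n : ℕ} {p : ℝ} (hp : 0 < p) (w : En n → ℝ≥0∞) (Q : Set (En n))
    (hQ : ∫⁻ x in Q, w x ≠ ∞) :
    wLorentz1 p w (Q.indicator 1) = ENNReal.ofReal p * (∫⁻ x in Q, w x) ^ (1 / p) := by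
  rw [← lintegral_Ioi_indicator_ofReal_lt_rpow hp hQ, wLorentz1]
  congr 1 with t
  by_cases ht : ENNReal.ofReal t < ∫⁻ x in Q, w x <;> simp [wRearr_indicator_one, ht]

/-- The Lorentz norm dominates `p ∫₀^∞ w({|g| > α})^{1/p} dα`: by Tonelli the latter is
`∫₀^∞ t^{1/p - 1} |{α > 0 : w({|g| > α}) > t}| dt`, and that measure is at most `g*_w(t)`. -/
lemma ofReal_mul_lintegral_wDist_rpow_le_wLorentz1 {n : ℕ} {p : ℝ} (hp : 0 < p)
    (w : En n → ℝ≥0∞) (g : En n → ℝ) (hg : ∀ α > 0, wDist w g α ≠ ∞) :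
    ENNReal.ofReal p * ∫⁻ α in Ioi (0 : ℝ), wDist w g α ^ (1 / p) ≤ wLorentz1 p w g := by
  set S : Set (ℝ × ℝ) := {q | ENNReal.ofReal q.2 < wDist w g q.1}
  set F : ℝ × ℝ → ℝ≥0∞ := S.indicator fun q => ENNReal.ofReal (q.2 ^ (1 / p - 1))
  have hdist : Measurable (wDist w g) := (wDist_antitone w g).measurable
  have hSm : MeasurableSet S :=
    measurableSet_lt (ENNReal.measurable_ofReal.comp measurable_snd) (hdist.comp measurable_fst)
  have hF : Measurable F := (by fun_prop : Measurable fun q : ℝ × ℝ => _).indicator hSm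
  have hinner (t : ℝ) : ∫⁻ α in Ioi (0 : ℝ), F (α, t) ≤
      ENNReal.ofReal (t ^ (1 / p - 1)) * wRearr w g (ENNReal.ofReal t) := by
    have hsm : MeasurableSet {α : ℝ | ENNReal.ofReal t < wDist w g α} :=
      measurableSet_lt measurable_const hdist
    change ∫⁻ α in Ioi (0 : ℝ), {α | ENNReal.ofReal t < wDist w g α}.indicator
      (fun _ => ENNReal.ofReal (t ^ (1 / p - 1))) α ≤ _
    rw [lintegral_indicator_const hsm, Measure.restrict_apply hsm]
    exact mul_le_mul_right (volume_lt_wDist_le_wRearr w g _) _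
  calc ENNReal.ofReal p * ∫⁻ α in Ioi (0 : ℝ), wDist w g α ^ (1 / p)
      = ∫⁻ α in Ioi (0 : ℝ), ∫⁻ t in Ioi (0 : ℝ), F (α, t) := by
        rw [← lintegral_const_mul' _ _ ENNReal.ofReal_ne_top]
        refine setLIntegral_congr_fun measurableSet_Ioi fun α hα => ?_
        exact (lintegral_Ioi_indicator_ofReal_lt_rpow hp (hg α hα)).symm
    _ = ∫⁻ t in Ioi (0 : ℝ), ∫⁻ α in Ioi (0 : ℝ), F (α, t) :=
        lintegral_lintegral_swap hF.aemeasurable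
    _ ≤ wLorentz1 p w g := lintegral_mono hinner

lemma setOf_lt_abs_subset {α : Type*} {g : α → ℝ} {Q : Set α} (hg : g.support ⊆ Q) {t : ℝ}
    (ht : 0 ≤ t) : {x | t < |g x|} ⊆ Q :=
  fun _ hx => hg (abs_pos.mp (ht.trans_lt hx))

def Ap1Condition {n : ℕ} (p : ℝ) (w : En n → ℝ≥0∞) (C : ℝ≥0∞) : Prop :=
  ∀ (c : En n) (r : ℝ), 0 < r → ∀ E ⊆ Cube c r, MeasurableSet E →
    volume E / volume (Cube c r) ≤ C * ((∫⁻ x in E, w x) / ∫⁻ x in Cube c r, w x) ^ (1 / p)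

namespace Ap1Condition

variable {n : ℕ} {p : ℝ} {w : En n → ℝ≥0∞} {C : ℝ≥0∞} {c : En n} {r : ℝ}

lemma setLIntegral_cube_ne_top (hw : Ap1Condition p w C) (hp : 0 < p) (hr : 0 < r) :
    ∫⁻ x in Cube c r, w x ≠ ∞ := by
  intro hW
  have h := hw c r hr _ subset_rfl (measurableSet_cube c r)
  simp [ENNReal.div_self (volume_cube_ne_zero c hr) (volume_cube_ne_top c r), hW, hp] at h

lemma volume_le (hw : Ap1Condition p w C) (hp : 0 < p) (hr : 0 < r) {E : Set (En n)}
    (hE : E ⊆ Cube c r) (hEm : MeasurableSet E) :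
    volume E ≤ C * volume (Cube c r) *
      ((∫⁻ x in E, w x) ^ (1 / p) / (∫⁻ x in Cube c r, w x) ^ (1 / p)) := by
  rw [← ENNReal.div_rpow_of_nonneg _ _ (by positivity), mul_right_comm]
  exact (ENNReal.div_le_iff_le_mul (.inl (volume_cube_ne_zero c hr))
    (.inl (volume_cube_ne_top c r))).mp (hw c r hr E hE hEm)

lemma lintegral_enorm_le (hw : Ap1Condition p w C) (hp : 0 < p) (hr : 0 < r) {g : En n → ℝ}
    (hg : Measurable g) (hgQ : g.support ⊆ Cube c r) :
    ∫⁻ x, ‖g x‖ₑ ≤ C * volume (Cube c r) *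
      ((∫⁻ α in Ioi (0 : ℝ), wDist w g α ^ (1 / p)) / (∫⁻ x in Cube c r, w x) ^ (1 / p)) := by
  have hdist : Measurable fun α => wDist w g α ^ (1 / p) :=
    (wDist_antitone w g).measurable.pow_const _
  calc ∫⁻ x, ‖g x‖ₑ = ∫⁻ α in Ioi (0 : ℝ), volume {x | α < |g x|} := by
        simp only [Real.enorm_eq_ofReal_abs]
        exact lintegral_eq_lintegral_meas_lt _ (ae_of_all _ fun x => abs_nonneg _)
          hg.abs.aemeasurable
    _ ≤ ∫⁻ α in Ioi (0 : ℝ), C * volume (Cube c r) *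
          (wDist w g α ^ (1 / p) / (∫⁻ x in Cube c r, w x) ^ (1 / p)) :=
        setLIntegral_mono' measurableSet_Ioi fun α hα =>
          hw.volume_le hp hr (setOf_lt_abs_subset hgQ (le_of_lt hα))
            (measurableSet_lt measurable_const hg.abs)
    _ = _ := by
        simp_rw [ENNReal.div_eq_inv_mul]
        rw [lintegral_const_mul _ (hdist.const_mul _), lintegral_const_mul _ hdist]

lemma inv_mul_lintegral_div_volume_le (hw : Ap1Condition p w C) (hC0 : C ≠ 0) (hC : C ≠ ∞)
    (hp : 0 < p) (hr : 0 < r) {g : En n → ℝ} (hg : Measurable g) (hgQ : g.support ⊆ Cube c r) :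
    C⁻¹ * ((∫⁻ x, ‖g x‖ₑ) / volume (Cube c r)) ≤
      wLorentz1 p w g / wLorentz1 p w ((Cube c r).indicator 1) := by
  have hW : ∫⁻ x in Cube c r, w x ≠ ∞ := hw.setLIntegral_cube_ne_top hp hr
  have hdist (α : ℝ) (hα : 0 < α) : wDist w g α ≠ ∞ :=
    ne_top_of_le_ne_top hW (lintegral_mono_set (setOf_lt_abs_subset hgQ hα.le))
  have hp' : ENNReal.ofReal p ≠ 0 := (ENNReal.ofReal_pos.mpr hp).ne'
  calc C⁻¹ * ((∫⁻ x, ‖g x‖ₑ) / volume (Cube c r))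
      ≤ C⁻¹ * (C * volume (Cube c r) * ((∫⁻ α in Ioi (0 : ℝ), wDist w g α ^ (1 / p)) /
          (∫⁻ x in Cube c r, w x) ^ (1 / p)) / volume (Cube c r)) := by
        gcongr
        exact hw.lintegral_enorm_le hp hr hg hgQ
    _ = (ENNReal.ofReal p * ∫⁻ α in Ioi (0 : ℝ), wDist w g α ^ (1 / p)) /
          (ENNReal.ofReal p * (∫⁻ x in Cube c r, w x) ^ (1 / p)) := by
        rw [mul_right_comm, ENNReal.mul_div_cancel_right (volume_cube_ne_zero c hr)
          (volume_cube_ne_top c r), ENNReal.inv_mul_cancel_left hC0 hC,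
          ENNReal.mul_div_mul_left _ _ hp' ENNReal.ofReal_ne_top]
    _ ≤ wLorentz1 p w g / wLorentz1 p w ((Cube c r).indicator 1) := by
        rw [wLorentz1_indicator_one hp w _ hW]
        exact ENNReal.div_le_div_right
          (ofReal_mul_lintegral_wDist_rpow_le_wLorentz1 hp w g hdist) _

lemma inv_mul_lintegral_osc_div_volume_le (hw : Ap1Condition p w C) (hC0 : C ≠ 0)
    (hC : C ≠ ∞) (hp : 0 < p) (hr : 0 < r) {f : En n → ℝ} (hf : AEMeasurable f) :
    C⁻¹ * ((∫⁻ y in Cube c r, osc c r f y) / volume (Cube c r)) ≤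
      wLorentz1 p w ((Cube c r).indicator fun y => f y - cubeAvg c r f) /
        wLorentz1 p w ((Cube c r).indicator 1) := by
  set g := (Cube c r).indicator fun y => hf.mk f y - cubeAvg c r f
  have hfg : ((Cube c r).indicator fun y => f y - cubeAvg c r f) =ᵐ[volume] g := by
    filter_upwards [hf.ae_eq_mk] with y hy
    simp only [g, indicator, hy]
  have hosc : ∫⁻ y in Cube c r, osc c r f y = ∫⁻ y, ‖g y‖ₑ := by
    rw [← lintegral_indicator (measurableSet_cube c r)]
    refine lintegral_congr_ae ?_
    filter_upwards [hfg] with y hy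
    rw [← hy, enorm_indicator_eq_indicator_enorm]
    rfl
  rw [hosc, wLorentz1_congr_ae w p hfg]
  exact hw.inv_mul_lintegral_div_volume_le hC0 hC hp hr
    ((hf.measurable_mk.sub_const _).indicator (measurableSet_cube c r))
    support_indicator_subset

end Ap1Condition

theorem statement9_general {n : ℕ} (p : ℝ) (hp : 1 ≤ p) (w : En n → ℝ≥0∞)
    (hAp1 : ∃ C : ℝ≥0∞, 0 < C ∧ C ≠ ∞ ∧ ∀ (c : En n) (r : ℝ), 0 < r →
      ∀ E ⊆ Cube c r, MeasurableSet E →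
        volume E / volume (Cube c r) ≤
          C * ((∫⁻ x in E, w x) / ∫⁻ x in Cube c r, w x) ^ (1 / p))
    (φ : En n → ℝ → ℝ) :
    ∃ c0 : ℝ≥0∞, 0 < c0 ∧ c0 ≠ ∞ ∧ ∀ f : En n → ℝ, LocallyIntegrable f volume →
      c0 * campanato φ f ≤ ⨆ (c : En n) (r : ℝ) (_ : 0 < r),
        ENNReal.ofReal (φ c r) *
          (wLorentz1 p w ((Cube c r).indicator fun y => f y - cubeAvg c r f) /
            wLorentz1 p w ((Cube c r).indicator 1)) := by
  obtain ⟨C, hC0, hC, hw : Ap1Condition p w C⟩ := hAp1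
  refine ⟨C⁻¹, ENNReal.inv_pos.mpr hC, ENNReal.inv_ne_top.mpr hC0.ne', fun f hf => ?_⟩
  simp only [campanato, ENNReal.mul_iSup]
  refine iSup₂_le fun c r => iSup_le fun hr => le_iSup₂_of_le c r (le_iSup_of_le hr ?_)
  rw [mul_left_comm]
  exact mul_le_mul_right (hw.inv_mul_lintegral_osc_div_volume_le hC0.ne' hC
    (zero_lt_one.trans_le hp) hr hf.aestronglyMeasurable.aemeasurable) _

/-- under the `A(p,1)` condition on `w`, the Campanato norm is dominated by the
weighted Lorentz `L^{p,1}(w)`-ratio norm. -/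
theorem statement9 {n : ℕ} (p : ℝ) (hp : 1 ≤ p) (w : En n → ℝ≥0∞) (hw : Measurable w)
    (hAp1 : ∃ C : ℝ≥0∞, 0 < C ∧ C ≠ ∞ ∧ ∀ (c : En n) (r : ℝ), 0 < r →
      ∀ E ⊆ Cube c r, MeasurableSet E →
        volume E / volume (Cube c r) ≤
          C * ((∫⁻ x in E, w x) / ∫⁻ x in Cube c r, w x) ^ (1 / p))
    (φ : En n → ℝ → ℝ) (hφ : PhiPos φ) (hdec : AlmostDecr φ) (hnear : NearComparable φ) :
    ∃ c0 : ℝ≥0∞, 0 < c0 ∧ c0 ≠ ∞ ∧ ∀ f : En n → ℝ, LocallyIntegrable f volume →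
      c0 * campanato φ f ≤ ⨆ (c : En n) (r : ℝ) (_ : 0 < r),
        ENNReal.ofReal (φ c r) *
          (wLorentz1 p w ((Cube c r).indicator fun y => f y - cubeAvg c r f) /
            wLorentz1 p w ((Cube c r).indicator 1)) :=
  statement9_general p hp w hAp1 φ
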